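/- arXiv:2102.12093 — 2 statements merged into one kernel-verified Lean document; each statement's English description precedes it below -/
import Mathlib

section
/- Let μ be the Haar probability measure on SO(3). Let ψ̃, f̃ : SO(3) → ℝ be continuous, and suppose the filter ψ̃ is constant on right Z-cosets, i.e. ψ̃(R·Z(θ)) = ψ̃(R) for all R ∈ SO(3) and θ ∈ ℝ. Let θ₀ : SO(3) → ℝ be a measurable function that is constant on right Z-cosets, i.e. θ₀(R·Z(γ)) = θ₀(R) for all R ∈ SO(3), γ ∈ ℝ. Then for every Q, P ∈ SO(3): ∫₀^{2π} ∫_{SO(3)} ψ̃(R⁻¹·Q·P) · f̃(Q⁻¹·R·Z(θ₀(R)+γ)) dμ(R) dγ = ∫₀^{2π} ∫_{SO(3)} ψ̃(R⁻¹·P) · f̃(R·Z(γ)) dμ(R) dγ. (This is the point-wise rotation invariance of the spherical voxel convolution: [ψ ⋆ L_Q f](Qp) = [ψ ⋆ f](p).) -/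
/-!
Exchange the two integrals (Fubini applies because continuous functions on the compact group
`SO(3)` are bounded). For fixed `R`, the shift `γ ↦ θ₀(R) + γ` of the inner integral over a full
period of `γ ↦ Z(γ)` is absorbed by periodicity, and the remaining `Q` disappears after the
substitution `R ↦ Q R`, under which the Haar measure is invariant.
-/

open Matrix MeasureTheory

/-- The 3×3 rotation matrix about the z-axis by angle `θ`. -/
noncomputable def Zr (θ : ℝ) : Matrix (Fin 3) (Fin 3) ℝ :=
  !![Real.cos θ, -Real.sin θ, 0; Real.sin θ, Real.cos θ, 0; 0, 0, 1]

/-- The 3×3 rotation matrix about the y-axis by angle `β`. -/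
noncomputable def Yr (β : ℝ) : Matrix (Fin 3) (Fin 3) ℝ :=
  !![Real.cos β, 0, Real.sin β; 0, 1, 0; -Real.sin β, 0, Real.cos β]

lemma Zr_mem_unitary (θ : ℝ) : Zr θ ∈ Matrix.unitaryGroup (Fin 3) ℝ := by
  rw [Matrix.mem_unitaryGroup_iff']
  ext i j
  fin_cases i <;> fin_cases j <;>
    simp [Zr, Matrix.mul_apply, Fin.sum_univ_three, Matrix.one_apply, Matrix.star_apply] <;>
    nlinarith [Real.sin_sq_add_cos_sq θ]

lemma Zr_det (θ : ℝ) : (Zr θ).det = 1 := by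
  simp [Zr, Matrix.det_fin_three]
  nlinarith [Real.sin_sq_add_cos_sq θ]

lemma Yr_mem_unitary (β : ℝ) : Yr β ∈ Matrix.unitaryGroup (Fin 3) ℝ := by
  rw [Matrix.mem_unitaryGroup_iff']
  ext i j
  fin_cases i <;> fin_cases j <;>
    simp [Yr, Matrix.mul_apply, Fin.sum_univ_three, Matrix.one_apply, Matrix.star_apply] <;>
    nlinarith [Real.sin_sq_add_cos_sq β]

lemma Yr_det (β : ℝ) : (Yr β).det = 1 := by
  simp [Yr, Matrix.det_fin_three]
  nlinarith [Real.sin_sq_add_cos_sq β]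

instance : IsTopologicalGroup (Matrix.unitaryGroup (Fin 3) ℝ) where
  continuous_mul := by
    apply continuous_induced_rng.2
    exact ((continuous_subtype_val.comp continuous_fst).matrix_mul
      (continuous_subtype_val.comp continuous_snd))
  continuous_inv := by
    apply continuous_induced_rng.2
    show Continuous (fun a : Matrix.unitaryGroup (Fin 3) ℝ =>
      ((a⁻¹ : Matrix.unitaryGroup (Fin 3) ℝ) : Matrix (Fin 3) (Fin 3) ℝ))
    have : (fun a : Matrix.unitaryGroup (Fin 3) ℝ =>
          ((a⁻¹ : Matrix.unitaryGroup (Fin 3) ℝ) : Matrix (Fin 3) (Fin 3) ℝ))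
        = fun a : Matrix.unitaryGroup (Fin 3) ℝ => star (a.val) := rfl
    rw [this]
    exact continuous_star.comp continuous_subtype_val

/-- `SO(3)`: the group of real 3×3 orthogonal matrices of determinant one, as a
subgroup of the orthogonal (real unitary) group. -/
noncomputable def SO3 : Subgroup (Matrix.unitaryGroup (Fin 3) ℝ) where
  carrier := {A | (A : Matrix (Fin 3) (Fin 3) ℝ).det = 1}
  one_mem' := by simp
  mul_mem' := by
    intro a b ha hb
    simp only [Set.mem_setOf_eq, Submonoid.coe_mul, Matrix.det_mul] at *
    rw [ha, hb, mul_one]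
  inv_mem' := by
    intro a ha
    simp only [Set.mem_setOf_eq] at *
    have : ((a⁻¹ : Matrix.unitaryGroup (Fin 3) ℝ) : Matrix (Fin 3) (Fin 3) ℝ)
        = star ((a : Matrix (Fin 3) (Fin 3) ℝ)) := rfl
    rw [this]
    simpa [Matrix.star_eq_conjTranspose, Matrix.det_conjTranspose] using ha

noncomputable instance : MeasurableSpace SO3 := borel SO3
instance : BorelSpace SO3 := ⟨rfl⟩

/-- The z-axis rotation `Z(θ)` as an element of `SO3`. -/
noncomputable def zElem (θ : ℝ) : SO3 :=
  ⟨⟨Zr θ, Zr_mem_unitary θ⟩, Zr_det θ⟩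

/-- The y-axis rotation `Y(β)` as an element of `SO3`. -/
noncomputable def yElem (β : ℝ) : SO3 :=
  ⟨⟨Yr β, Yr_mem_unitary β⟩, Yr_det β⟩

theorem Matrix.isCompact_unitaryGroup {n 𝕜 : Type*} [Fintype n] [DecidableEq n] [RCLike 𝕜] :
    IsCompact (unitaryGroup n 𝕜 : Set (Matrix n n 𝕜)) :=
  (isCompact_univ_pi fun _ => isCompact_univ_pi fun _ => isCompact_closedBall (0 : 𝕜) 1)
    |>.of_isClosed_subset (isClosed_unitary (R := Matrix n n 𝕜)) fun _ hU i _ j _ =>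
      mem_closedBall_zero_iff.2 (entry_norm_bound_of_unitary hU i j)

instance {n 𝕜 : Type*} [Fintype n] [DecidableEq n] [RCLike 𝕜] :
    CompactSpace (unitaryGroup n 𝕜) :=
  isCompact_iff_compactSpace.mp isCompact_unitaryGroup

theorem isClosed_SO3 : IsClosed (SO3 : Set (unitaryGroup (Fin 3) ℝ)) :=
  isClosed_singleton.preimage (continuous_subtype_val.matrix_det (n := Fin 3))

instance : CompactSpace SO3 :=
  isCompact_iff_compactSpace.mp isClosed_SO3.isCompact

instance {m n R : Type*} [Countable m] [Countable n] [TopologicalSpace R]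
    [SecondCountableTopology R] : SecondCountableTopology (Matrix m n R) :=
  inferInstanceAs (SecondCountableTopology (m → n → R))

instance {n 𝕜 : Type*} [Fintype n] [DecidableEq n] [RCLike 𝕜] :
    SecondCountableTopology (unitaryGroup n 𝕜) :=
  TopologicalSpace.secondCountableTopology_induced _ _ Subtype.val

instance : SecondCountableTopology SO3 :=
  TopologicalSpace.secondCountableTopology_induced _ _ Subtype.val

theorem continuous_zElem : Continuous zElem := by
  refine .subtype_mk (.subtype_mk (continuous_matrix fun i j => ?_) _) _
  fin_cases i <;> fin_cases j <;> simp [Zr] <;> fun_prop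

theorem zElem_periodic : Function.Periodic zElem (2 * Real.pi) := fun θ => by
  ext i j
  fin_cases i <;> fin_cases j <;> simp [zElem, Zr]

theorem Function.Periodic.intervalIntegral_comp_const_add {E : Type*} [NormedAddCommGroup E]
    [NormedSpace ℝ E] {g : ℝ → E} {T : ℝ} (hg : Function.Periodic g T) (c : ℝ) :
    ∫ γ in (0 : ℝ)..T, g (c + γ) = ∫ γ in (0 : ℝ)..T, g γ := by
  rw [intervalIntegral.integral_comp_add_left, add_zero, hg.intervalIntegral_add_eq c 0,
    zero_add]

section ContinuousOnCompact

variable {G : Type*} [TopologicalSpace G] [CompactSpace G] [MeasurableSpace G]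
  [OpensMeasurableSpace G] {ψ f : G → ℝ}

theorem integrable_mul_comp {α : Type*} [MeasurableSpace α] {ν : Measure α} [IsFiniteMeasure ν]
    (hψ : Continuous ψ) (hf : Continuous f) {u v : α → G} (hu : Measurable u)
    (hv : Measurable v) : Integrable (fun x => ψ (u x) * f (v x)) ν := by
  obtain ⟨Cψ, hCψ⟩ := isCompact_univ.exists_bound_of_continuousOn hψ.continuousOn
  obtain ⟨Cf, hCf⟩ := isCompact_univ.exists_bound_of_continuousOn hf.continuousOn
  refine .of_bound ((hψ.measurable.comp hu).mul (hf.measurable.comp hv)).aestronglyMeasurable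
    (Cψ * Cf) (ae_of_all _ fun x => ?_)
  rw [norm_mul]
  exact mul_le_mul (hCψ _ trivial) (hCf _ trivial) (norm_nonneg _)
    ((norm_nonneg _).trans (hCψ (u x) trivial))

theorem intervalIntegral_integral_mul_comp {α : Type*} [MeasurableSpace α] (μ : Measure α)
    [IsFiniteMeasure μ] (hψ : Continuous ψ) (hf : Continuous f) {u : α → G} (hu : Measurable u)
    {v : ℝ → α → G} (hv : Measurable (Function.uncurry v)) (s t : ℝ) :
    ∫ γ in s..t, ∫ x, ψ (u x) * f (v γ x) ∂μ = ∫ x, ψ (u x) * (∫ γ in s..t, f (v γ x)) ∂μ := by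
  have : IsFiniteMeasure (volume.restrict (Set.uIoc s t)) := by
    rw [Set.uIoc]; infer_instance
  rw [intervalIntegral_integral_swap (integrable_mul_comp hψ hf (hu.comp measurable_snd) hv)]
  simp only [intervalIntegral.integral_const_mul]

end ContinuousOnCompact

theorem intervalIntegral_integral_mul_translate_eq {G : Type*} [Group G] [TopologicalSpace G]
    [IsTopologicalGroup G] [CompactSpace G] [MeasurableSpace G] [BorelSpace G]
    [SecondCountableTopology G] (μ : Measure G) [μ.IsMulLeftInvariant] [IsFiniteMeasure μ]
    {z : ℝ → G} (hz : Continuous z) {T : ℝ} (hzT : Function.Periodic z T) {ψ f : G → ℝ}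
    (hψ : Continuous ψ) (hf : Continuous f) {θ₀ : G → ℝ} (hθ₀ : Measurable θ₀) (Q P : G) :
    ∫ γ in (0 : ℝ)..T, ∫ R, ψ (R⁻¹ * Q * P) * f (Q⁻¹ * R * z (θ₀ R + γ)) ∂μ
      = ∫ γ in (0 : ℝ)..T, ∫ R, ψ (R⁻¹ * P) * f (R * z γ) ∂μ := by
  have hzm := hz.measurable
  rw [intervalIntegral_integral_mul_comp μ hψ hf (by fun_prop) (by fun_prop),
    intervalIntegral_integral_mul_comp μ hψ hf (by fun_prop) (by fun_prop)]
  calc ∫ R, ψ (R⁻¹ * Q * P) * (∫ γ in (0 : ℝ)..T, f (Q⁻¹ * R * z (θ₀ R + γ))) ∂μ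
      = ∫ R, ψ (R⁻¹ * Q * P) * (∫ γ in (0 : ℝ)..T, f (Q⁻¹ * R * z γ)) ∂μ := by
        congr with R
        exact congrArg (ψ _ * ·)
          ((hzT.comp fun g => f (Q⁻¹ * R * g)).intervalIntegral_comp_const_add (θ₀ R))
    _ = ∫ R, ψ ((Q * R)⁻¹ * Q * P) * (∫ γ in (0 : ℝ)..T, f (Q⁻¹ * (Q * R) * z γ)) ∂μ :=
        (integral_mul_left_eq_self _ Q).symm
    _ = ∫ R, ψ (R⁻¹ * P) * (∫ γ in (0 : ℝ)..T, f (R * z γ)) ∂μ := by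
        simp only [_root_.mul_inv_rev, mul_assoc, inv_mul_cancel_left]

theorem spherical_voxel_convolution_rotation_invariant_general
    (μ : Measure SO3) [μ.IsHaarMeasure]
    (ψ f : SO3 → ℝ) (hψc : Continuous ψ) (hfc : Continuous f)
    (θ₀ : SO3 → ℝ) (hθ₀m : Measurable θ₀)
    (Q P : SO3) :
    (∫ γ in (0:ℝ)..(2 * Real.pi), ∫ R, ψ (R⁻¹ * Q * P) * f (Q⁻¹ * R * zElem (θ₀ R + γ)) ∂μ)
      = ∫ γ in (0:ℝ)..(2 * Real.pi), ∫ R, ψ (R⁻¹ * P) * f (R * zElem γ) ∂μ :=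
  intervalIntegral_integral_mul_translate_eq μ continuous_zElem zElem_periodic hψc hfc hθ₀m Q P

/-- **Point-wise rotation invariance of the spherical voxel convolution.**
For the Haar probability measure `μ` on `SO(3)`, a continuous filter `ψ` constant on
right `Z`-cosets, a continuous signal `f`, and a measurable coset-angle function `θ₀`
constant on right `Z`-cosets, the convolution satisfies `[ψ ⋆ L_Q f](Qp) = [ψ ⋆ f](p)`. -/
theorem spherical_voxel_convolution_rotation_invariant
    (μ : Measure SO3) [μ.IsHaarMeasure] [IsProbabilityMeasure μ]
    (ψ f : SO3 → ℝ) (hψc : Continuous ψ) (hfc : Continuous f)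
    (hψ : ∀ (R : SO3) (θ : ℝ), ψ (R * zElem θ) = ψ R)
    (θ₀ : SO3 → ℝ) (hθ₀m : Measurable θ₀)
    (hθ₀ : ∀ (R : SO3) (γ : ℝ), θ₀ (R * zElem γ) = θ₀ R)
    (Q P : SO3) :
    (∫ γ in (0:ℝ)..(2 * Real.pi), ∫ R, ψ (R⁻¹ * Q * P) * f (Q⁻¹ * R * zElem (θ₀ R + γ)) ∂μ)
      = ∫ γ in (0:ℝ)..(2 * Real.pi), ∫ R, ψ (R⁻¹ * P) * f (R * zElem γ) ∂μ :=
  spherical_voxel_convolution_rotation_invariant_general μ ψ f hψc hfc θ₀ hθ₀m Q P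
end

section
/- Let ψ : ℝ³ → ℝ satisfy ψ(Z(θ)·v) = ψ(v) for all θ ∈ ℝ and v ∈ ℝ³ (ψ is constant on the left coset of z-axis rotations). Let x₁, …, x_N ∈ ℝ³ be points, let x_j ≠ 0 with h = ‖x_j‖, and let Q ∈ SO(3). Choose α, β ∈ ℝ with Z(α)·Y(β)·n = x_j/‖x_j‖ and α′, β′ ∈ ℝ with Z(α′)·Y(β′)·n = Q·x_j/‖x_j‖ (note ‖Q·x_j‖ = ‖x_j‖). Then the sparse correlation is point-wise rotation invariant: (1/N)·∑_{i=1}^{N} ψ((Z(α′)·Y(β′)·Z(2πh))⁻¹ · Q·x_i) = (1/N)·∑_{i=1}^{N} ψ((Z(α)·Y(β)·Z(2πh))⁻¹ · x_i), i.e. [ψ ∗ L_Q f](Q·x_j) = [ψ ∗ f](x_j) for the empirical point-cloud distribution f. -/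
/-- The North Pole `n = (0,0,1)ᵀ`. -/
def npole : Fin 3 → ℝ := ![0, 0, 1]

/-- The Euclidean norm of a vector in `ℝ³`. -/
noncomputable def enorm3 (v : Fin 3 → ℝ) : ℝ :=
  Real.sqrt (v 0 ^ 2 + v 1 ^ 2 + v 2 ^ 2)

open Matrix

lemma Real.exists_cos_eq_and_sin_eq {a c : ℝ} (h : a ^ 2 + c ^ 2 = 1) :
    ∃ θ, Real.cos θ = a ∧ Real.sin θ = c := by
  have hnorm : ‖(⟨a, c⟩ : ℂ)‖ = 1 := by
    rw [Complex.norm_def, Complex.normSq_mk, ← sq, ← sq, h, Real.sqrt_one]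
  refine ⟨Complex.arg ⟨a, c⟩, ?_, ?_⟩
  · simpa [hnorm] using Complex.norm_mul_cos_arg ⟨a, c⟩
  · simpa [hnorm] using Complex.norm_mul_sin_arg ⟨a, c⟩

lemma Matrix.inv_eq_transpose_of_mem_orthogonalGroup {n : Type*} [Fintype n] [DecidableEq n]
    {A : Matrix n n ℝ} (hA : A ∈ orthogonalGroup n ℝ) : A⁻¹ = Aᵀ :=
  inv_eq_left_inv ((mem_orthogonalGroup_iff' n ℝ).1 hA)

lemma Matrix.isUnit_det_of_mem_specialOrthogonalGroup {n : Type*} [Fintype n] [DecidableEq n]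
    {A : Matrix n n ℝ} (hA : A ∈ specialOrthogonalGroup n ℝ) : IsUnit A.det := by
  rw [(mem_specialOrthogonalGroup_iff.1 hA).2]
  exact isUnit_one

lemma Matrix.inv_mem_specialOrthogonalGroup {n : Type*} [Fintype n] [DecidableEq n]
    {A : Matrix n n ℝ} (hA : A ∈ specialOrthogonalGroup n ℝ) :
    A⁻¹ ∈ specialOrthogonalGroup n ℝ := by
  rw [mem_specialOrthogonalGroup_iff] at hA ⊢
  rw [inv_eq_transpose_of_mem_orthogonalGroup hA.1, det_transpose]
  exact ⟨transpose_mem_unitaryGroup_iff.2 hA.1, hA.2⟩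

lemma Zr_mem_specialOrthogonalGroup (θ : ℝ) : Zr θ ∈ specialOrthogonalGroup (Fin 3) ℝ := by
  refine ⟨(mem_orthogonalGroup_iff _ _).2 ?_, ?_⟩
  · ext i j
    fin_cases i <;> fin_cases j <;> simp [Zr, mul_apply, Fin.sum_univ_three, one_apply] <;>
      nlinarith [Real.sin_sq_add_cos_sq θ]
  · simp [Zr, det_fin_three]
    nlinarith [Real.sin_sq_add_cos_sq θ]

lemma Yr_mem_specialOrthogonalGroup (β : ℝ) : Yr β ∈ specialOrthogonalGroup (Fin 3) ℝ := by
  refine ⟨(mem_orthogonalGroup_iff _ _).2 ?_, ?_⟩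
  · ext i j
    fin_cases i <;> fin_cases j <;> simp [Yr, mul_apply, Fin.sum_univ_three, one_apply] <;>
      nlinarith [Real.sin_sq_add_cos_sq β]
  · simp [Yr, det_fin_three]
    nlinarith [Real.sin_sq_add_cos_sq β]

lemma npole_eq_single : npole = Pi.single 2 1 := by
  ext i; fin_cases i <;> rfl

lemma Zr_mulVec_npole (θ : ℝ) : Zr θ *ᵥ npole = npole := by
  ext i
  fin_cases i <;> simp [Zr, npole, mulVec, dotProduct, Fin.sum_univ_three]

lemma mul_Zr_mulVec_npole (A : Matrix (Fin 3) (Fin 3) ℝ) (θ : ℝ) :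
    (A * Zr θ) *ᵥ npole = A *ᵥ npole := by
  rw [← mulVec_mulVec, Zr_mulVec_npole]

lemma exists_Zr_eq_of_mem_specialOrthogonalGroup {a b c d : ℝ}
    (h : !![a, b, 0; c, d, 0; 0, 0, 1] ∈ specialOrthogonalGroup (Fin 3) ℝ) :
    ∃ θ, Zr θ = !![a, b, 0; c, d, 0; 0, 0, 1] := by
  obtain ⟨hO, hdet⟩ := h
  have hTM := congrFun₂ ((mem_orthogonalGroup_iff' _ _).1 hO)
  have hcol : a ^ 2 + c ^ 2 = 1 := by simpa [mul_apply, Fin.sum_univ_three, sq] using hTM 0 0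
  have hdot : a * b + c * d = 0 := by simpa [mul_apply, Fin.sum_univ_three] using hTM 0 1
  have hdet' : a * d - b * c = 1 := by simpa [det_fin_three] using hdet
  obtain ⟨θ, hcos, hsin⟩ := Real.exists_cos_eq_and_sin_eq hcol
  have hd : d = a := by linear_combination a * hdet' + c * hdot - d * hcol
  have hb : b = -c := by linear_combination a * hdot - c * hdet' - b * hcol
  exact ⟨θ, by rw [Zr, hcos, hsin, hd, hb]⟩

lemma exists_eq_Zr_of_mulVec_npole {M : Matrix (Fin 3) (Fin 3) ℝ}
    (hM : M ∈ specialOrthogonalGroup (Fin 3) ℝ) (hfix : M *ᵥ npole = npole) :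
    ∃ θ, M = Zr θ := by
  have hfixT : Mᵀ *ᵥ npole = npole := by
    rw [← inv_eq_transpose_of_mem_orthogonalGroup hM.1]
    conv_lhs => rw [← hfix]
    rw [mulVec_mulVec, nonsing_inv_mul _ (isUnit_det_of_mem_specialOrthogonalGroup hM), one_mulVec]
  have hcol : ∀ i, M i 2 = npole i := fun i => by
    rw [← congrFun hfix i, npole_eq_single, mulVec_single_one]; rfl
  have hrow : ∀ i, M 2 i = npole i := fun i => by
    rw [← congrFun hfixT i, npole_eq_single, mulVec_single_one]; rfl
  have hblock : M = !![M 0 0, M 0 1, 0; M 1 0, M 1 1, 0; 0, 0, 1] := by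
    ext i j
    fin_cases i <;> fin_cases j <;> simp [hcol, hrow, npole]
  rw [hblock] at hM ⊢
  obtain ⟨θ, hθ⟩ := exists_Zr_eq_of_mem_specialOrthogonalGroup hM
  exact ⟨θ, hθ.symm⟩

lemma exists_inv_mul_eq_Zr_mul_inv {A A' Q : Matrix (Fin 3) (Fin 3) ℝ}
    (hA : A ∈ specialOrthogonalGroup (Fin 3) ℝ) (hA' : A' ∈ specialOrthogonalGroup (Fin 3) ℝ)
    (hQ : Q ∈ specialOrthogonalGroup (Fin 3) ℝ) (h : A' *ᵥ npole = Q *ᵥ (A *ᵥ npole)) :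
    ∃ θ, A'⁻¹ * Q = Zr θ * A⁻¹ := by
  have hfix : (A'⁻¹ * Q * A) *ᵥ npole = npole := by
    rw [← mulVec_mulVec, ← mulVec_mulVec, ← h, mulVec_mulVec,
      nonsing_inv_mul _ (isUnit_det_of_mem_specialOrthogonalGroup hA'), one_mulVec]
  obtain ⟨θ, hθ⟩ :=
    exists_eq_Zr_of_mulVec_npole (mul_mem (mul_mem (inv_mem_specialOrthogonalGroup hA') hQ) hA) hfix
  refine ⟨θ, ?_⟩
  rw [← hθ, Matrix.mul_assoc _ A, mul_nonsing_inv _ (isUnit_det_of_mem_specialOrthogonalGroup hA),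
    Matrix.mul_one]

theorem sparse_correlation_rotation_invariant_general
    (ψ : (Fin 3 → ℝ) → ℝ)
    (hψ : ∀ (θ : ℝ) (v : Fin 3 → ℝ), ψ ((Zr θ).mulVec v) = ψ v)
    (N : ℕ) (x : Fin N → Fin 3 → ℝ) (j : Fin N)
    (Q : Matrix (Fin 3) (Fin 3) ℝ) (hQ : Q ∈ Matrix.specialOrthogonalGroup (Fin 3) ℝ)
    (α β α' β' : ℝ)
    (hαβ : (Zr α * Yr β).mulVec npole = (enorm3 (x j))⁻¹ • x j)
    (hαβ' : (Zr α' * Yr β').mulVec npole = (enorm3 (x j))⁻¹ • Q.mulVec (x j)) :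
    (1 / (N : ℝ)) *
        ∑ i : Fin N,
          ψ ((Zr α' * Yr β' * Zr (2 * Real.pi * enorm3 (x j)))⁻¹.mulVec (Q.mulVec (x i)))
      = (1 / (N : ℝ)) *
        ∑ i : Fin N,
          ψ ((Zr α * Yr β * Zr (2 * Real.pi * enorm3 (x j)))⁻¹.mulVec (x i)) := by
  set h := 2 * Real.pi * enorm3 (x j)
  have hSO : ∀ a b, Zr a * Yr b * Zr h ∈ specialOrthogonalGroup (Fin 3) ℝ := fun a b =>
    mul_mem (mul_mem (Zr_mem_specialOrthogonalGroup a) (Yr_mem_specialOrthogonalGroup b))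
      (Zr_mem_specialOrthogonalGroup h)
  have hpole : (Zr α' * Yr β' * Zr h) *ᵥ npole = Q *ᵥ ((Zr α * Yr β * Zr h) *ᵥ npole) := by
    rw [mul_Zr_mulVec_npole, mul_Zr_mulVec_npole, hαβ, hαβ', mulVec_smul]
  obtain ⟨θ, hθ⟩ := exists_inv_mul_eq_Zr_mul_inv (hSO α β) (hSO α' β') hQ hpole
  congr 1
  refine Finset.sum_congr rfl fun i _ => ?_
  rw [mulVec_mulVec, hθ, ← mulVec_mulVec, hψ]

/-- **Sparse point-wise rotation invariance of the sparse correlation (SPRIN).**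
If `ψ` is constant on the left coset of z-axis rotations, then for any point cloud
`x₁, …, x_N`, any `x_j ≠ 0` with `h = ‖x_j‖`, any `Q ∈ SO(3)`, and spherical angles
`(α, β)` of `x_j/‖x_j‖` resp. `(α′, β′)` of `Q·x_j/‖x_j‖`, one has
`[ψ ∗ L_Q f](Q·x_j) = [ψ ∗ f](x_j)` for the empirical distribution `f`. -/
theorem sparse_correlation_rotation_invariant
    (ψ : (Fin 3 → ℝ) → ℝ)
    (hψ : ∀ (θ : ℝ) (v : Fin 3 → ℝ), ψ ((Zr θ).mulVec v) = ψ v)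
    (N : ℕ) (x : Fin N → Fin 3 → ℝ) (j : Fin N) (hxj : x j ≠ 0)
    (Q : Matrix (Fin 3) (Fin 3) ℝ) (hQ : Q ∈ Matrix.specialOrthogonalGroup (Fin 3) ℝ)
    (α β α' β' : ℝ)
    (hαβ : (Zr α * Yr β).mulVec npole = (enorm3 (x j))⁻¹ • x j)
    (hαβ' : (Zr α' * Yr β').mulVec npole = (enorm3 (x j))⁻¹ • Q.mulVec (x j)) :
    (1 / (N : ℝ)) *
        ∑ i : Fin N,
          ψ ((Zr α' * Yr β' * Zr (2 * Real.pi * enorm3 (x j)))⁻¹.mulVec (Q.mulVec (x i)))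
      = (1 / (N : ℝ)) *
        ∑ i : Fin N,
          ψ ((Zr α * Yr β * Zr (2 * Real.pi * enorm3 (x j)))⁻¹.mulVec (x i)) :=
  sparse_correlation_rotation_invariant_general ψ hψ N x j Q hQ α β α' β' hαβ hαβ'
end
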